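/- arXiv:2404.07319 — 3 statements merged into one kernel-verified Lean document; each statement's English description precedes it below -/
import Mathlib

section
/- Let x, y be coprime integers. For any 0 ≤ k < j ≤ (r−1)/2, if a prime ideal π of O_K divides both f_k·O_K and f_j·O_K, then π = β. In other words, the factors f_0, f_1, …, f_{(r−1)/2} are pairwise coprime outside β. -/
/-!
Write `θ = ζ + ζ⁻¹` and `α_n = ζ^n + ζ^{-n}`. Since `(α_k - α_j) x y = f_k - f_j` and a prime
containing `f_k` contains neither `x` nor `y` (they are coprime), `π` contains `α_k - α_j`. The
d'Alembert identity `α_m α_n = α_{m+n} + α_{m-n}` gives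
`(α_k - α_j)² = (2 - α_{j-k})(2 - α_{j+k})` and `2 - α_m ∣ 2 - α_{mt}`; since `α` is `r`-periodic
and `j ± k` is prime to `r`, both factors divide `2 - α_1`, so `β ⊆ π`.

`β` is maximal because its norm is the prime `r`: `2 - θ = (ζ - 1)(ζ⁻¹ - 1)` with both factors of
norm `r` from `ℚ(ζ)`, and `[ℚ(ζ) : ℚ(θ)] = 2` because complex conjugation fixes every complex
image of `θ` but no complex image of `ζ`.
-/

open NumberField IntermediateField Module Polynomial

section DAlembert

variable {R : Type*} [CommRing R] {a : ℕ → R}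
  (h0 : a 0 = 2) (hadd : ∀ m n, n ≤ m → a m * a n = a (m + n) + a (m - n))
include h0 hadd

theorem two_sub_dvd_two_sub_mul (m t : ℕ) : 2 - a m ∣ 2 - a (m * t) := by
  induction t using Nat.twoStepInduction with
  | zero => simp [h0]
  | one => simp
  | more t ih ih' =>
    have hrec := hadd (m * (t + 1)) m (Nat.le_mul_of_pos_right m t.succ_pos)
    rw [show m * (t + 1) + m = m * (t + 2) by ring,
      show m * (t + 1) - m = m * t by rw [Nat.mul_succ, Nat.add_sub_cancel]] at hrec
    have key : 2 - a (m * (t + 2)) =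
        (2 - a m) * a (m * (t + 1)) + 2 * (2 - a (m * (t + 1))) - (2 - a (m * t)) := by
      linear_combination hrec
    rw [key]
    exact dvd_sub (dvd_add (dvd_mul_right _ _) (ih'.mul_left 2)) ih

theorem two_sub_dvd_two_sub_one {r m : ℕ} (hper : ∀ n, a (n % r) = a n) (hr : 1 < r)
    (hm : m.Coprime r) : 2 - a m ∣ 2 - a 1 := by
  obtain ⟨t, -, ht⟩ := Nat.exists_mul_mod_eq_one_of_coprime hm hr
  simpa [← hper (m * t), ht] using two_sub_dvd_two_sub_mul h0 hadd m t

theorem sub_sq_eq_two_sub_mul_two_sub {k j : ℕ} (hkj : k ≤ j) :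
    (a k - a j) ^ 2 = (2 - a (j - k)) * (2 - a (j + k)) := by
  have hk := hadd k k le_rfl
  have hj := hadd j j le_rfl
  have hjk := hadd j k hkj
  have hsd := hadd (j + k) (j - k) (by omega)
  rw [Nat.sub_self, h0] at hk hj
  rw [show j + k + (j - k) = j + j by omega, show j + k - (j - k) = k + k by omega] at hsd
  linear_combination hk + hj - 2 * hjk - hsd

end DAlembert

theorem pow_add_inv_pow_mul_pow_add_inv_pow {F : Type*} [Field F] {x : F} (hx : x ≠ 0) {m n : ℕ}
    (hnm : n ≤ m) : (x ^ m + x⁻¹ ^ m) * (x ^ n + x⁻¹ ^ n) =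
      (x ^ (m + n) + x⁻¹ ^ (m + n)) + (x ^ (m - n) + x⁻¹ ^ (m - n)) := by
  obtain ⟨c, rfl⟩ := Nat.exists_eq_add_of_le hnm
  have h : x ^ n * x⁻¹ ^ n = 1 := by rw [← mul_pow, mul_inv_cancel₀ hx, one_pow]
  rw [Nat.add_sub_cancel_left]
  linear_combination (x ^ c + x⁻¹ ^ c) * h

theorem Ideal.mul_notMem_of_isCoprime {R : Type*} [CommRing R] {P : Ideal R} [hP : P.IsPrime]
    {x y c : R} (hxy : IsCoprime x y) (h : x ^ 2 + c * x * y + y ^ 2 ∈ P) : x * y ∉ P := by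
  have hnot_both : ¬ (x ∈ P ∧ y ∈ P) := fun ⟨hx, hy⟩ ↦
    (P.ne_top_iff_one).mp hP.ne_top <| by
      obtain ⟨u, v, huv⟩ := hxy
      exact huv ▸ P.add_mem (P.mul_mem_left u hx) (P.mul_mem_left v hy)
  intro hmul
  rcases hP.mem_or_mem hmul with hx | hy
  · refine hnot_both ⟨hx, hP.mem_of_pow_mem 2 ?_⟩
    have : y ^ 2 = (x ^ 2 + c * x * y + y ^ 2) - (x + c * y) * x := by ring
    exact this ▸ P.sub_mem h (P.mul_mem_left _ hx)
  · refine hnot_both ⟨hP.mem_of_pow_mem 2 ?_, hy⟩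
    have : x ^ 2 = (x ^ 2 + c * x * y + y ^ 2) - (c * x + y) * y := by ring
    exact this ▸ P.sub_mem h (P.mul_mem_left _ hy)

theorem IntermediateField.norm_coe {K L : Type*} [Field K] [Field L] [Algebra K L]
    [FiniteDimensional K L] (F : IntermediateField K L) (y : F) :
    Algebra.norm K (y : L) = Algebra.norm K y ^ finrank F L := by
  rw [← Algebra.norm_norm (S := F), ← IntermediateField.algebraMap_apply, Algebra.norm_algebraMap,
    map_pow]

namespace IsPrimitiveRoot

variable {L : Type*} [Field L] {r : ℕ} {ζ : L}

theorem two_sub_mem_of_sub_mem (hζ : IsPrimitiveRoot ζ r) (hr : r.Prime) {R : Type*} [CommRing R]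
    {φ : R →+* L} (hφ : Function.Injective φ) {a : ℕ → R} (ha : ∀ n, φ (a n) = ζ ^ n + ζ⁻¹ ^ n)
    {P : Ideal R} [hP : P.IsPrime] {k j : ℕ} (hkj : k < j) (hjk : j + k < r) (h : a k - a j ∈ P) :
    2 - a 1 ∈ P := by
  have h0 : a 0 = 2 := hφ <| by rw [ha, map_ofNat]; norm_num
  have hadd (m n : ℕ) (hnm : n ≤ m) : a m * a n = a (m + n) + a (m - n) := hφ <| by
    rw [map_mul, map_add, ha, ha, ha, ha]
    exact pow_add_inv_pow_mul_pow_add_inv_pow (hζ.ne_zero hr.ne_zero) hnm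
  have hper (n : ℕ) : a (n % r) = a n := hφ <| by
    rw [ha, ha, ← pow_mod_orderOf ζ n, ← pow_mod_orderOf ζ⁻¹ n, ← hζ.eq_orderOf,
      ← hζ.inv.eq_orderOf]
  have hdvd (m : ℕ) (hm0 : 0 < m) (hmr : m < r) : 2 - a m ∣ 2 - a 1 :=
    two_sub_dvd_two_sub_one h0 hadd hper hr.one_lt <|
      ((Nat.Prime.coprime_iff_not_dvd hr).mpr (Nat.not_dvd_of_pos_of_lt hm0 hmr)).symm
  have hprod : (2 - a (j - k)) * (2 - a (j + k)) ∈ P :=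
    sub_sq_eq_two_sub_mul_two_sub h0 hadd hkj.le ▸ Ideal.pow_mem_of_mem P h 2 two_pos
  rcases hP.mem_or_mem hprod with hm | hm
  · exact Ideal.mem_of_dvd _ (hdvd _ (by omega) (by omega)) hm
  · exact Ideal.mem_of_dvd _ (hdvd _ (by omega) (by omega)) hm

variable [NumberField L]

theorem notMem_adjoin_add_inv (hζ : IsPrimitiveRoot ζ r) (hr : 2 < r) : ζ ∉ ℚ⟮ζ + ζ⁻¹⟯ := by
  intro hmem
  let σ : L →ₐ[ℚ] ℂ := IsAlgClosed.lift
  let σbar : L →ₐ[ℚ] ℂ := (Complex.conjAe.restrictScalars ℚ).toAlgHom.comp σ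
  have hw : IsPrimitiveRoot (σ ζ) r := hζ.map_of_injective σ.injective
  have hconj : starRingEnd ℂ (σ ζ) = (σ ζ)⁻¹ := by
    refine eq_inv_of_mul_eq_one_right ?_
    rw [Complex.mul_conj', hw.norm'_eq_one (by omega)]
    simp
  have hθ : σbar (ζ + ζ⁻¹) = σ (ζ + ζ⁻¹) := by
    simp [σbar, hconj, add_comm]
  have hle : ℚ⟮ζ + ζ⁻¹⟯.toSubalgebra ≤ AlgHom.equalizer σbar σ := by
    rw [adjoin_simple_toSubalgebra_of_isAlgebraic (.of_finite ℚ _)]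
    exact Algebra.adjoin_le (Set.singleton_subset_iff.mpr hθ)
  have hfix : (σ ζ)⁻¹ = σ ζ := by simpa [σbar, hconj] using hle hmem
  have : σ ζ ^ 2 = 1 := by
    rw [sq]; nth_rewrite 1 [← hfix]; exact inv_mul_cancel₀ (hw.ne_zero (by omega))
  have := Nat.le_of_dvd two_pos (hw.dvd_of_pow_eq_one 2 this)
  omega

theorem finrank_adjoin_add_inv_mul_two (hζ : IsPrimitiveRoot ζ r) (hr : 2 < r) :
    finrank ℚ ℚ⟮ζ + ζ⁻¹⟯ * 2 = r.totient := by
  set K := ℚ⟮ζ + ζ⁻¹⟯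
  have hKle : K ≤ ℚ⟮ζ⟯ := adjoin_simple_le_iff.mpr <|
    add_mem (mem_adjoin_simple_self ℚ ζ) (inv_mem (mem_adjoin_simple_self ℚ ζ))
  have hdeg_le : (minpoly K ζ).natDegree ≤ 2 := by
    let θ : K := AdjoinSimple.gen ℚ (ζ + ζ⁻¹)
    have hmonic : (X ^ 2 - C θ * X + 1 : K[X]).Monic := by monicity!
    have hroot : aeval ζ (X ^ 2 - C θ * X + 1 : K[X]) = 0 := by
      have hζ0 : ζ ≠ 0 := hζ.ne_zero (by omega)
      simp [θ]
      field_simp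
      ring
    calc (minpoly K ζ).natDegree ≤ (X ^ 2 - C θ * X + 1 : K[X]).natDegree :=
          natDegree_le_natDegree (minpoly.min K ζ hmonic hroot)
      _ ≤ 2 := by compute_degree
  have hdeg_ne_one : (minpoly K ζ).natDegree ≠ 1 := by
    rintro hdeg
    obtain ⟨x, hx⟩ := minpoly.natDegree_eq_one_iff.mp hdeg
    exact hζ.notMem_adjoin_add_inv hr (hx ▸ x.2 : ζ ∈ K)
  have hrel : relfinrank K ℚ⟮ζ⟯ = 2 := by
    rw [relfinrank_eq_finrank_of_le hKle, extendScalars_adjoin hKle, adjoin.finrank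
      (.of_finite K ζ)]
    have := minpoly.natDegree_pos (IsIntegral.of_finite K ζ)
    omega
  rw [← hrel, finrank_bot_mul_relfinrank hKle, adjoin.finrank (.of_finite ℚ ζ),
    ← cyclotomic_eq_minpoly_rat hζ (by omega), natDegree_cyclotomic]

theorem norm_sub_one_pow (hζ : IsPrimitiveRoot ζ r) (hr : r.Prime) (hr2 : r ≠ 2) :
    Algebra.norm ℚ (ζ - 1) ^ (r - 1) = (r : ℚ) ^ finrank ℚ L := by
  have : Fact r.Prime := ⟨hr⟩
  have : NeZero r := ⟨hr.ne_zero⟩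
  have : IsCyclotomicExtension {r} ℚ ℚ⟮ζ⟯ := hζ.intermediateField_adjoin_isCyclotomicExtension ℚ
  have hgen : IsPrimitiveRoot (AdjoinSimple.gen ℚ ζ) r :=
    hζ.of_map_of_injective (f := ℚ⟮ζ⟯.val) Subtype.val_injective
  have hnorm : Algebra.norm ℚ (AdjoinSimple.gen ℚ ζ - 1) = r :=
    hgen.norm_sub_one_of_prime_ne_two' (cyclotomic.irreducible_rat hr.pos) hr2
  have hL : Algebra.norm ℚ (ζ - 1) = Algebra.norm ℚ (AdjoinSimple.gen ℚ ζ - 1) ^ finrank ℚ⟮ζ⟯ L := by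
    rw [show ζ - 1 = ((AdjoinSimple.gen ℚ ζ - 1 : ℚ⟮ζ⟯) : L) by simp]
    exact norm_coe _ _
  rw [hL, hnorm, ← finrank_mul_finrank ℚ ℚ⟮ζ⟯ L, adjoin.finrank (.of_finite ℚ ζ),
    ← cyclotomic_eq_minpoly_rat hζ hr.pos, natDegree_cyclotomic, Nat.totient_prime hr, ← pow_mul,
    mul_comm]

theorem abs_norm_two_sub_gen (hζ : IsPrimitiveRoot ζ r) (hr : r.Prime) (hr2 : r ≠ 2) :
    |Algebra.norm ℚ (2 - AdjoinSimple.gen ℚ (ζ + ζ⁻¹))| = r := by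
  set K := ℚ⟮ζ + ζ⁻¹⟯
  set N := Algebra.norm ℚ (2 - AdjoinSimple.gen ℚ (ζ + ζ⁻¹))
  have hζ0 : ζ ≠ 0 := hζ.ne_zero hr.ne_zero
  have hfactor : ((2 - AdjoinSimple.gen ℚ (ζ + ζ⁻¹) : K) : L) = (ζ - 1) * (ζ⁻¹ - 1) := by
    simp [show ((2 : K) : L) = 2 from map_ofNat K.val 2]
    field_simp
    ring
  have hdeg := hζ.finrank_adjoin_add_inv_mul_two (hr.two_le.lt_of_ne' hr2)
  rw [Nat.totient_prime hr] at hdeg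
  have hL : Algebra.norm ℚ ((2 - AdjoinSimple.gen ℚ (ζ + ζ⁻¹) : K) : L) = N ^ finrank K L :=
    norm_coe K _
  have hpow : N ^ (finrank K L * (r - 1)) = (r : ℚ) ^ (finrank K L * (r - 1)) := by
    rw [pow_mul, ← hL, hfactor, map_mul, mul_pow, hζ.norm_sub_one_pow hr hr2,
      hζ.inv.norm_sub_one_pow hr hr2, ← finrank_mul_finrank ℚ K L, ← pow_add, ← hdeg]
    ring
  have hexp : finrank K L * (r - 1) ≠ 0 :=
    Nat.mul_ne_zero finrank_pos.ne' (by have := hr.two_le; omega)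
  rw [← pow_left_inj₀ (abs_nonneg N) (Nat.cast_nonneg r) hexp, pow_abs, hpow, abs_pow,
    Nat.abs_cast]

theorem absNorm_span_two_sub (hζ : IsPrimitiveRoot ζ r) (hr : r.Prime) (hr2 : r ≠ 2)
    {a : 𝓞 ℚ⟮ζ + ζ⁻¹⟯} (ha : ((a : ℚ⟮ζ + ζ⁻¹⟯) : L) = ζ + ζ⁻¹) :
    Ideal.absNorm (Ideal.span {2 - a}) = r := by
  have hgen : (a : ℚ⟮ζ + ζ⁻¹⟯) = AdjoinSimple.gen ℚ (ζ + ζ⁻¹) := Subtype.ext ha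
  rw [Ideal.absNorm_span_singleton, ← Nat.cast_inj (R := ℚ), Nat.cast_natAbs, Int.cast_abs,
    Algebra.coe_norm_int]
  push_cast [hgen]
  exact hζ.abs_norm_two_sub_gen hr hr2

theorem isMaximal_span_two_sub (hζ : IsPrimitiveRoot ζ r) (hr : r.Prime) (hr2 : r ≠ 2)
    {a : 𝓞 ℚ⟮ζ + ζ⁻¹⟯} (ha : ((a : ℚ⟮ζ + ζ⁻¹⟯) : L) = ζ + ζ⁻¹) :
    (Ideal.span {2 - a}).IsMaximal := by
  have habs := hζ.absNorm_span_two_sub hr hr2 ha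
  refine Ideal.IsPrime.isMaximal ?_ fun h ↦ hr.ne_zero (by rw [← habs, h, Ideal.absNorm_bot])
  exact Ideal.isPrime_of_irreducible_absNorm (habs ▸ hr.prime.irreducible)

end IsPrimitiveRoot

/-- for coprime integers x, y and 0 ≤ k < j ≤ (r−1)/2, any prime ideal π of O_K
dividing both f_k·O_K and f_j·O_K equals β. -/
theorem stmt_3 (r : ℕ) (hr : r.Prime) (hr5 : 5 < r)
    (L : Type) [Field L] [NumberField L] (ζ : L) (hζ : IsPrimitiveRoot ζ r)
    (K : IntermediateField ℚ L) (hK : K = ℚ⟮ζ + ζ⁻¹⟯) [NumberField K]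
    (α : ℕ → 𝓞 K) (hα : ∀ j, ((α j : K) : L) = ζ ^ j + ζ⁻¹ ^ j)
    (β : Ideal (𝓞 K)) (hβ : β = Ideal.span {(2 : 𝓞 K) - α 1})
    (x y : ℤ) (hxy : Int.gcd x y = 1)
    (f : ℕ → 𝓞 K)
    (hf : ∀ j, f j = (x : 𝓞 K) ^ 2 + α j * (x : 𝓞 K) * (y : 𝓞 K) + (y : 𝓞 K) ^ 2)
    (k j : ℕ) (hkj : k < j) (hj : j ≤ (r - 1) / 2) :
    ∀ π : Ideal (𝓞 K), π.IsPrime →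
      π ∣ Ideal.span {f k} → π ∣ Ideal.span {f j} → π = β := by
  subst hK hβ
  intro π hπ hπk hπj
  rw [Ideal.dvd_span_singleton] at hπk hπj
  let φ : 𝓞 ℚ⟮ζ + ζ⁻¹⟯ →+* L := (algebraMap ℚ⟮ζ + ζ⁻¹⟯ L).comp (algebraMap _ _)
  have hφ : Function.Injective φ := Subtype.val_injective.comp RingOfIntegers.coe_injective
  have hxy_notMem : (x : 𝓞 ℚ⟮ζ + ζ⁻¹⟯) * y ∉ π := by
    refine Ideal.mul_notMem_of_isCoprime ?_ (hf k ▸ hπk)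
    simpa using (Int.isCoprime_iff_gcd_eq_one.mpr hxy).map (Int.castRingHom (𝓞 ℚ⟮ζ + ζ⁻¹⟯))
  have hdiff : α k - α j ∈ π := by
    have : (α k - α j) * (x * y) = f k - f j := by rw [hf, hf]; ring
    exact (hπ.mem_or_mem (this ▸ π.sub_mem hπk hπj)).resolve_right hxy_notMem
  have hβπ : Ideal.span {2 - α 1} ≤ π := by
    rw [Ideal.span_le, Set.singleton_subset_iff]
    exact hζ.two_sub_mem_of_sub_mem hr hφ hα hkj (by omega) hdiff
  exact ((hζ.isMaximal_span_two_sub hr (by omega) (by simpa using hα 1)).eq_of_le hπ.ne_top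
    hβπ).symm
end

section
/- Let D be a nonzero integer with gcd(D, r) = 1, let p be a prime with p ≠ r, and let (x, y, z) be integers with gcd(x, y, z) = 1, xyz ≠ 0, x^r + y^r = D·z^p, and k := v_r(z) > 0. Set A = (α_1 − α_2)(x + y)², B = (α_2 − 2)·f_1, C = (2 − α_1)·f_2. Then v_β(B·O_K) = v_β(C·O_K) = 2 and v_β(A·O_K) = (p·k − 1)(r − 1) + 1. -/
/-!
By Fermat's little theorem `r ∣ x + y`, so `r ∤ x, y` by coprimality, and lifting the exponent
turns `v_r(x ^ r + y ^ r) = p k` into `x + y = r ^ (p k - 1) w` with `r ∤ w`.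

Put `π = 2 - α₁`. In the ring of integers of `L`, `2 - α_j = (ζ ^ j - 1)(ζ ^ (r - j) - 1)` and
`α₁ - α₂ = (ζ - 1)(ζ ^ (r - 2) - ζ)` are associated to `(ζ - 1) ^ 2` (cyclotomic units), and
`r = ∏ (1 - η)` over the primitive roots `η` is associated to `(ζ - 1) ^ (r - 1)`. Divisibility
descends from `𝓞 L` to `𝓞 K`, so `2 - α₂ ~ α₁ - α₂ ~ π` and `r ~ π ^ ((r - 1) / 2)`; taking norms,
`π` then divides no integer prime to `r`. Now `x + y` is `π ^ ((r - 1)(p k - 1) / 2)` times an element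
prime to `π`, which gives `v_β(A)`, and `f_j = (x + y) ^ 2 - (2 - α_j) x y` with `π ∤ x y` gives
`v_β(f₁) = v_β(f₂) = 1`.
-/

open NumberField IntermediateField

theorem Ideal.emultiplicity_span_singleton {R : Type*} [CommRing R] [IsDedekindDomain R]
    (a b : R) : emultiplicity (span {a}) (span {b}) = emultiplicity a b :=
  emultiplicity_eq_emultiplicity_iff.mpr fun n ↦ by
    rw [span_singleton_pow, dvd_iff_le, span_singleton_le_span_singleton]

section Multiplicity

theorem emultiplicity_pow_mul_of_not_dvd {α : Type*} [CommMonoidWithZero α] [IsCancelMulZero α]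
    {π u : α} (hπ : π ≠ 0) (hu : ¬π ∣ u) (n : ℕ) : emultiplicity π (π ^ n * u) = n :=
  emultiplicity_eq_of_dvd_of_not_dvd (dvd_mul_right _ _) fun h ↦ hu <| by
    rwa [pow_succ, mul_dvd_mul_iff_left (pow_ne_zero n hπ)] at h

variable {R : Type*} [CommRing R] [IsDomain R] {π u : R}

theorem emultiplicity_mul_sq_sub_mul (hπ : π ≠ 0) (hu : Associated π u) {s c : R} (hs : π ∣ s)
    (hc : ¬π ∣ c) : emultiplicity π (u * (s ^ 2 - π * c)) = 2 := by
  obtain ⟨v, rfl⟩ := hu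
  obtain ⟨t, rfl⟩ := hs
  rw [show π * v * ((π * t) ^ 2 - π * c) = π ^ 2 * (v * (π * t ^ 2 - c)) by ring,
    emultiplicity_pow_mul_of_not_dvd hπ, Nat.cast_ofNat]
  rwa [Units.dvd_mul_left, dvd_sub_right (dvd_mul_right _ _)]

theorem emultiplicity_mul_sq_pow_mul (hπ : π ≠ 0) (hu : Associated π u) {t : R}
    (ht : ¬π ∣ t ^ 2) (e : ℕ) : emultiplicity π (u * (π ^ e * t) ^ 2) = (2 * e + 1 : ℕ) := by
  obtain ⟨v, rfl⟩ := hu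
  rw [show π * v * (π ^ e * t) ^ 2 = π ^ (2 * e + 1) * (v * t ^ 2) by ring,
    emultiplicity_pow_mul_of_not_dvd hπ]
  rwa [Units.dvd_mul_left]

end Multiplicity

namespace Int

variable {r : ℕ} {x y : ℤ}

theorem dvd_add_of_dvd_pow_add_pow [Fact r.Prime] (h : (r : ℤ) ∣ x ^ r + y ^ r) :
    (r : ℤ) ∣ x + y := by
  rw [← ZMod.intCast_zmod_eq_zero_iff_dvd] at h ⊢
  push_cast at h ⊢
  rwa [ZMod.pow_card, ZMod.pow_card] at h

theorem not_dvd_mul_of_dvd_add_of_gcd_eq_one {q z : ℤ} (hq : Prime q)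
    (hgcd : Int.gcd (Int.gcd x y) z = 1) (hxy : q ∣ x + y) (hz : q ∣ z) : ¬q ∣ x * y := by
  have hx : ¬q ∣ x := fun h ↦ hq.not_dvd_one <| by
    simpa [hgcd] using Int.dvd_coe_gcd (Int.dvd_coe_gcd h ((dvd_add_right h).mp hxy)) hz
  exact fun h ↦ (hq.dvd_or_dvd h).elim hx fun hy ↦ hx ((dvd_add_left hy).mp hxy)

theorem emultiplicity_mul_pow_of_not_dvd (hr : r.Prime) {D z : ℤ} (hD : ¬(r : ℤ) ∣ D)
    (hz : z ≠ 0) (p : ℕ) : emultiplicity (r : ℤ) (D * z ^ p) = (p * padicValInt r z : ℕ) := by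
  have hrZ : Prime (r : ℤ) := Nat.prime_iff_prime_int.mp hr
  have hfin : FiniteMultiplicity (r : ℤ) z :=
    Int.finiteMultiplicity_iff.mpr ⟨by simpa using hr.ne_one, hz⟩
  rw [emultiplicity_mul hrZ, emultiplicity_pow hrZ, emultiplicity_eq_zero.mpr hD,
    hfin.emultiplicity_eq_multiplicity, padicValInt.of_ne_one_ne_zero hr.ne_one hz]
  push_cast
  ring

theorem exists_add_eq_pow_mul_of_pow_add_pow_eq (hr : r.Prime) (hodd : Odd r) {p : ℕ}
    (hp : p ≠ 0) {D z : ℤ} (hD : ¬(r : ℤ) ∣ D) (hgcd : Int.gcd (Int.gcd x y) z = 1)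
    (hk : 0 < padicValInt r z) (heq : x ^ r + y ^ r = D * z ^ p) :
    ¬(r : ℤ) ∣ x * y ∧ ∃ w, x + y = r ^ (p * padicValInt r z - 1) * w ∧ ¬(r : ℤ) ∣ w := by
  have : Fact r.Prime := ⟨hr⟩
  have hz : z ≠ 0 := by rintro rfl; simp at hk
  have hrz : (r : ℤ) ∣ z := by simpa using (padicValInt_dvd_iff 1 z).mpr (Or.inr hk)
  have hxy : (r : ℤ) ∣ x + y := dvd_add_of_dvd_pow_add_pow (heq ▸ (hrz.pow hp).mul_left D)
  have hrxy := not_dvd_mul_of_dvd_add_of_gcd_eq_one (Nat.prime_iff_prime_int.mp hr) hgcd hxy hrz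
  refine ⟨hrxy, ?_⟩
  have hlte := emultiplicity_pow_add_pow hr hodd hxy (fun h ↦ hrxy (h.mul_right y)) hodd
  rw [heq, emultiplicity_mul_pow_of_not_dvd hr hD hz, hr.emultiplicity_self] at hlte
  have hm : emultiplicity (r : ℤ) (x + y) = (p * padicValInt r z - 1 : ℕ) := by
    rw [ENat.natCast_sub, hlte, Nat.cast_one,
      (ENat.addLECancellable_of_ne_top ENat.one_ne_top).add_tsub_cancel_right]
  obtain ⟨w, hw, hrw⟩ :=
    (finiteMultiplicity_of_emultiplicity_eq_natCast hm).exists_eq_pow_mul_and_not_dvd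
  rw [multiplicity_eq_of_emultiplicity_eq_some hm] at hw
  exact ⟨w, hw, hrw⟩

end Int

namespace IsPrimitiveRoot

variable {A : Type*} [CommRing A] [IsDomain A] {ζ : A} {n : ℕ}

open Polynomial in
theorem associated_sub_one_pow_prime {p : ℕ} (hp : p.Prime) (hζ : IsPrimitiveRoot ζ p) :
    Associated ((ζ - 1) ^ (p - 1)) (p : A) := by
  have : Fact p.Prime := ⟨hp⟩
  rw [← eval_one_cyclotomic_prime (R := A) (p := p), cyclotomic_eq_prod_X_sub_primitiveRoots hζ,
    eval_prod, ← Nat.totient_prime hp, ← hζ.card_primitiveRoots, ← Finset.prod_const]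
  refine Associated.prod _ _ _ fun η hη ↦ ?_
  obtain ⟨i, -, hi, rfl⟩ := hζ.isPrimitiveRoot_iff.mp (isPrimitiveRoot_of_mem_primitiveRoots hη)
  simpa using (hζ.associated_sub_one_pow_sub_one_of_coprime hi).neg_right

theorem associated_sub_one_sq_two_sub_pow_add_pow (hζ : IsPrimitiveRoot ζ n) {j : ℕ} (hj : j ≤ n)
    (hjn : j.Coprime n) : Associated ((ζ - 1) ^ 2) (2 - (ζ ^ j + ζ ^ (n - j))) := by
  have h : ζ ^ j * ζ ^ (n - j) = 1 := by rw [← pow_add, Nat.add_sub_cancel' hj, hζ.pow_eq_one]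
  rw [show 2 - (ζ ^ j + ζ ^ (n - j)) = (ζ ^ j - 1) * (ζ ^ (n - j) - 1) by linear_combination -h, sq]
  exact (hζ.associated_sub_one_pow_sub_one_of_coprime hjn).mul_mul
    (hζ.associated_sub_one_pow_sub_one_of_coprime ((Nat.coprime_self_sub_left hj).mpr hjn))

theorem associated_sub_one_sq_pow_add_pow_sub (hζ : IsPrimitiveRoot ζ n) (hn : 3 ≤ n)
    (h3 : Nat.Coprime 3 n) :
    Associated ((ζ - 1) ^ 2) ((ζ ^ 1 + ζ ^ (n - 1)) - (ζ ^ 2 + ζ ^ (n - 2))) := by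
  have h : (ζ ^ 1 + ζ ^ (n - 1)) - (ζ ^ 2 + ζ ^ (n - 2)) =
      (ζ - 1) * (ζ ^ (1 + (n - 3)) - ζ ^ 1) := by
    have e1 : ζ ^ (n - 1) = ζ ^ (n - 2) * ζ := by rw [← pow_succ]; congr 1; omega
    have e2 : ζ ^ (1 + (n - 3)) = ζ ^ (n - 2) := by congr 1; omega
    rw [e1, e2]; ring
  rw [h, sq]
  exact (Associated.refl _).mul_mul
    (hζ.associated_pow_add_sub_sub_one (by omega) 1 ((Nat.coprime_self_sub_left hn).mpr h3))

end IsPrimitiveRoot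

namespace NumberField.RingOfIntegers

variable {K L : Type*} [Field K] [Field L] [Algebra K L]

theorem dvd_of_algebraMap_dvd_algebraMap {a b : 𝓞 K}
    (h : algebraMap (𝓞 K) (𝓞 L) a ∣ algebraMap (𝓞 K) (𝓞 L) b) : a ∣ b := by
  obtain ⟨c, hc⟩ := h
  rcases eq_or_ne a 0 with rfl | ha
  · rw [map_zero, zero_mul] at hc
    simp [(injective_iff_map_eq_zero _).mp (FaithfulSMul.algebraMap_injective (𝓞 K) (𝓞 L)) b hc]
  have ha' : (a : K) ≠ 0 := by exact_mod_cast ha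
  have hd : algebraMap K L (b / a) = c := by
    have hc' : algebraMap K L b = algebraMap K L a * c := congrArg ((↑) : 𝓞 L → L) hc
    rw [map_div₀, hc', mul_div_cancel_left₀ _ ((_root_.map_ne_zero _).mpr ha')]
  refine ⟨⟨b / a, (isIntegral_algebraMap_iff (algebraMap K L).injective).mp
    (hd ▸ c.isIntegral_coe)⟩, coe_injective ?_⟩
  exact (mul_div_cancel₀ _ ha').symm

theorem associated_of_algebraMap_associated {a b : 𝓞 K}
    (h : Associated (algebraMap (𝓞 K) (𝓞 L) a) (algebraMap (𝓞 K) (𝓞 L) b)) : Associated a b :=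
  associated_of_dvd_dvd (dvd_of_algebraMap_dvd_algebraMap h.dvd)
    (dvd_of_algebraMap_dvd_algebraMap h.symm.dvd)

theorem intCast_dvd_intCast [NumberField K] {a b : ℤ} : (a : 𝓞 K) ∣ (b : 𝓞 K) ↔ a ∣ b := by
  refine ⟨fun h ↦ ?_, map_dvd (Int.castRingHom (𝓞 K))⟩
  rw [← eq_intCast (algebraMap ℤ (𝓞 K)), ← eq_intCast (algebraMap ℤ (𝓞 K))] at h
  have h' := map_dvd (Algebra.norm ℤ) h
  rw [Algebra.norm_algebraMap, Algebra.norm_algebraMap] at h'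
  exact (IsIntegrallyClosed.pow_dvd_pow_iff Module.finrank_pos.ne').mp h'

theorem not_dvd_intCast_of_associated_pow [NumberField K] {π : 𝓞 K} {m n : ℕ}
    (hn : Prime (n : ℤ)) (h : Associated (π ^ m) (n : 𝓞 K)) {t : ℤ} (ht : ¬(n : ℤ) ∣ t) :
    ¬π ∣ (t : 𝓞 K) := fun hπ ↦ ht <| hn.dvd_of_dvd_pow (n := m) <| intCast_dvd_intCast.mp <| by
  push_cast
  exact h.symm.dvd.trans (pow_dvd_pow_of_dvd hπ m)

end NumberField.RingOfIntegers

section RealCyclotomic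

variable {K L : Type*} [Field K] [Field L] [Algebra K L] {r : ℕ} {ζ : L} {α : ℕ → 𝓞 K}

theorem exists_isPrimitiveRoot_algebraMap_eq (hζ : IsPrimitiveRoot ζ r) (hr : r ≠ 0)
    (hα : ∀ j, algebraMap K L (α j) = ζ ^ j + ζ⁻¹ ^ j) :
    ∃ η : 𝓞 L, IsPrimitiveRoot η r ∧
      ∀ j ≤ r, algebraMap (𝓞 K) (𝓞 L) (α j) = η ^ j + η ^ (r - j) := by
  refine ⟨⟨ζ, hζ.isIntegral (Nat.pos_of_ne_zero hr)⟩,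
    hζ.of_map_of_injective (f := algebraMap (𝓞 L) L) RingOfIntegers.coe_injective,
    fun j hj ↦ RingOfIntegers.coe_injective ?_⟩
  have hinv : ζ⁻¹ ^ j = ζ ^ (r - j) := by
    rw [inv_pow]
    refine inv_eq_of_mul_eq_one_right ?_
    rw [← pow_add, Nat.add_sub_cancel' hj, hζ.pow_eq_one]
  change algebraMap K L (α j) = _
  rw [hα, hinv]
  rfl

variable (hζ : IsPrimitiveRoot ζ r) (hα : ∀ j, algebraMap K L (α j) = ζ ^ j + ζ⁻¹ ^ j)
include hζ hα

theorem associated_two_sub_of_coprime (hr : r ≠ 0) {j : ℕ} (hj : j ≤ r) (hjr : j.Coprime r) :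
    Associated (2 - α 1) (2 - α j) := by
  obtain ⟨η, hη, hαη⟩ := exists_isPrimitiveRoot_algebraMap_eq hζ hr hα
  refine RingOfIntegers.associated_of_algebraMap_associated (L := L) ?_
  rw [map_sub, map_sub, map_ofNat, hαη 1 (Nat.one_le_iff_ne_zero.mpr hr), hαη j hj]
  exact (hη.associated_sub_one_sq_two_sub_pow_add_pow (Nat.one_le_iff_ne_zero.mpr hr)
    (Nat.coprime_one_left r)).symm.trans (hη.associated_sub_one_sq_two_sub_pow_add_pow hj hjr)

theorem associated_two_sub_sub (hr : 3 ≤ r) (h3 : Nat.Coprime 3 r) :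
    Associated (2 - α 1) (α 1 - α 2) := by
  obtain ⟨η, hη, hαη⟩ := exists_isPrimitiveRoot_algebraMap_eq hζ (by omega) hα
  refine RingOfIntegers.associated_of_algebraMap_associated (L := L) ?_
  rw [map_sub, map_sub, map_ofNat, hαη 1 (by omega), hαη 2 (by omega)]
  exact (hη.associated_sub_one_sq_two_sub_pow_add_pow (by omega)
    (Nat.coprime_one_left r)).symm.trans (hη.associated_sub_one_sq_pow_add_pow_sub hr h3)

theorem associated_two_sub_pow_natCast (hr : r.Prime) (hodd : Odd r) :
    Associated ((2 - α 1) ^ (r / 2)) (r : 𝓞 K) := by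
  obtain ⟨η, hη, hαη⟩ := exists_isPrimitiveRoot_algebraMap_eq hζ hr.ne_zero hα
  refine RingOfIntegers.associated_of_algebraMap_associated (L := L) ?_
  rw [map_pow, map_natCast, map_sub, map_ofNat, hαη 1 hr.one_lt.le]
  have h := (hη.associated_sub_one_sq_two_sub_pow_add_pow hr.one_lt.le
    (Nat.coprime_one_left r)).symm.pow_pow (n := r / 2)
  rw [← pow_mul, show 2 * (r / 2) = r - 1 by obtain ⟨c, rfl⟩ := hodd; omega] at h
  exact h.trans (hη.associated_sub_one_pow_prime hr)

end RealCyclotomic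

theorem stmt_11_general (r : ℕ) (hr : r.Prime) (hr5 : 5 < r)
    (L : Type) [Field L] [NumberField L] (ζ : L) (hζ : IsPrimitiveRoot ζ r)
    (K : IntermediateField ℚ L) [NumberField K]
    (α : ℕ → 𝓞 K) (hα : ∀ j, ((α j : K) : L) = ζ ^ j + ζ⁻¹ ^ j)
    (β : Ideal (𝓞 K)) (hβ : β = Ideal.span {(2 : 𝓞 K) - α 1})
    (D : ℤ) (hDr : Int.gcd D r = 1)
    (p : ℕ) (hp : p.Prime)
    (x y z : ℤ) (hgcd : Int.gcd (Int.gcd x y) z = 1)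
    (heq : x ^ r + y ^ r = D * z ^ p)
    (hk : 0 < padicValInt r z)
    (f : ℕ → 𝓞 K)
    (hf : ∀ j, f j = (x : 𝓞 K) ^ 2 + α j * (x : 𝓞 K) * (y : 𝓞 K) + (y : 𝓞 K) ^ 2)
    (A B C : 𝓞 K)
    (hA : A = (α 1 - α 2) * ((x : 𝓞 K) + (y : 𝓞 K)) ^ 2)
    (hB : B = (α 2 - 2) * f 1)
    (hC : C = (2 - α 1) * f 2) :
    emultiplicity β (Ideal.span {B}) = 2 ∧
    emultiplicity β (Ideal.span {C}) = 2 ∧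
    emultiplicity β (Ideal.span {A}) =
      (((p * padicValInt r z - 1) * (r - 1) + 1 : ℕ) : ℕ∞) := by
  have hodd : Odd r := hr.odd_of_ne_two (by omega)
  have hrZ : Prime (r : ℤ) := Nat.prime_iff_prime_int.mp hr
  have hrD : ¬(r : ℤ) ∣ D := fun h ↦ hrZ.not_dvd_one <| by
    simpa [hDr] using Int.dvd_coe_gcd h (dvd_refl (r : ℤ))
  obtain ⟨hrxy, w, hw, hrw⟩ :=
    Int.exists_add_eq_pow_mul_of_pow_add_pow_eq hr hodd hp.ne_zero hrD hgcd hk heq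
  set π : 𝓞 K := 2 - α 1
  have hπ2 : Associated π (2 - α 2) := associated_two_sub_of_coprime hζ hα hr.ne_zero (by omega)
    ((Nat.coprime_primes (by norm_num) hr).mpr (by omega))
  have hπ12 : Associated π (α 1 - α 2) := associated_two_sub_sub hζ hα (by omega)
    ((Nat.coprime_primes (by norm_num) hr).mpr (by omega))
  obtain ⟨u, hu⟩ : Associated (π ^ (r / 2)) (r : 𝓞 K) :=
    associated_two_sub_pow_natCast hζ hα hr hodd
  have hπ0 : π ≠ 0 := fun h ↦ hr.ne_zero <| by
    simpa [h, zero_pow (show r / 2 ≠ 0 by omega)] using hu.symm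
  have hπ_not_dvd {t : ℤ} (ht : ¬(r : ℤ) ∣ t) : ¬π ∣ (t : 𝓞 K) :=
    RingOfIntegers.not_dvd_intCast_of_associated_pow hrZ ⟨u, hu⟩ ht
  have hsum : (x : 𝓞 K) + y = π ^ (r / 2 * (p * padicValInt r z - 1)) *
      (u ^ (p * padicValInt r z - 1) * w) := by
    rw [pow_mul, ← mul_assoc, ← mul_pow, hu]
    exact_mod_cast hw
  have hpk : 2 ≤ p * padicValInt r z := Nat.mul_le_mul hp.two_le hk
  have hπsum : π ∣ (x : 𝓞 K) + y :=
    hsum ▸ dvd_mul_of_dvd_left (dvd_pow_self π (Nat.mul_ne_zero (by omega) (by omega))) _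
  refine ⟨?_, ?_, ?_⟩ <;> rw [hβ, Ideal.emultiplicity_span_singleton]
  · rw [show B = (α 2 - 2) * (((x : 𝓞 K) + y) ^ 2 - π * (x * y)) by rw [hB, hf]; ring]
    exact emultiplicity_mul_sq_sub_mul hπ0 (by simpa using hπ2.neg_right) hπsum
      (by exact_mod_cast hπ_not_dvd hrxy)
  · obtain ⟨v, hv⟩ := hπ2
    rw [show C = π * (((x : 𝓞 K) + y) ^ 2 - π * (v * (x * y))) by
      rw [hC, hf]; linear_combination (π * x * y) * hv]
    exact emultiplicity_mul_sq_sub_mul hπ0 (Associated.refl π) hπsum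
      (by rw [Units.dvd_mul_left]; exact_mod_cast hπ_not_dvd hrxy)
  · have hπw : ¬π ∣ ((w ^ 2 : ℤ) : 𝓞 K) := hπ_not_dvd fun h ↦ hrw (hrZ.dvd_of_dvd_pow h)
    rw [hA, hsum, emultiplicity_mul_sq_pow_mul hπ0 hπ12]
    · have hr2 : r - 1 = 2 * (r / 2) := by obtain ⟨c, rfl⟩ := hodd; omega
      rw [hr2]
      ring_nf
    · rwa [mul_pow, ← pow_mul, ← Units.val_pow_eq_pow_val, Units.dvd_mul_left, ← Int.cast_pow]

/-- v_β(B·O_K) = v_β(C·O_K) = 2 and v_β(A·O_K) = (p·k − 1)(r − 1) + 1. -/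
theorem stmt_11 (r : ℕ) (hr : r.Prime) (hr5 : 5 < r)
    (L : Type) [Field L] [NumberField L] (ζ : L) (hζ : IsPrimitiveRoot ζ r)
    (K : IntermediateField ℚ L) (hK : K = ℚ⟮ζ + ζ⁻¹⟯) [NumberField K]
    (α : ℕ → 𝓞 K) (hα : ∀ j, ((α j : K) : L) = ζ ^ j + ζ⁻¹ ^ j)
    (β : Ideal (𝓞 K)) (hβ : β = Ideal.span {(2 : 𝓞 K) - α 1})
    (D : ℤ) (hD : D ≠ 0) (hDr : Int.gcd D r = 1)
    (p : ℕ) (hp : p.Prime) (hpr : p ≠ r)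
    (x y z : ℤ) (hgcd : Int.gcd (Int.gcd x y) z = 1) (hxyz : x * y * z ≠ 0)
    (heq : x ^ r + y ^ r = D * z ^ p)
    (hk : 0 < padicValInt r z)
    (f : ℕ → 𝓞 K)
    (hf : ∀ j, f j = (x : 𝓞 K) ^ 2 + α j * (x : 𝓞 K) * (y : 𝓞 K) + (y : 𝓞 K) ^ 2)
    (A B C : 𝓞 K)
    (hA : A = (α 1 - α 2) * ((x : 𝓞 K) + (y : 𝓞 K)) ^ 2)
    (hB : B = (α 2 - 2) * f 1)
    (hC : C = (2 - α 1) * f 2) :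
    emultiplicity β (Ideal.span {B}) = 2 ∧
    emultiplicity β (Ideal.span {C}) = 2 ∧
    emultiplicity β (Ideal.span {A}) =
      (((p * padicValInt r z - 1) * (r - 1) + 1 : ℕ) : ℕ∞) :=
  stmt_11_general r hr hr5 L ζ hζ K α hα β hβ D hDr p hp x y z hgcd heq hk f hf A B C hA hB hC
end

section
/- Let D be a nonzero integer with gcd(D, r) = 1, let p be an odd prime with p ≠ r, and let (x, y, z) be integers with gcd(x, y, z) = 1, xyz ≠ 0, x^r + y^r = D·z^p, and v_r(z) > 0. Set A = (α_1 − α_2)(x + y)², B = (α_2 − 2)·f_1, and let E_2 be the Weierstrass curve y² = x(x − A)(x + B) over K. Then v_β(j(E_2)) < 0 and p does not divide v_β(j(E_2)). -/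
/-!
Write `π = 2 - α₁` and `e = (r - 1) / 2`. Pairing `ζʲ` with `ζ⁻ʲ` in `∏ (1 - ζʲ) = r` gives
`r = ∏_{j ≤ e} (2 - αⱼ)`, and since the `αⱼ` form a Lucas sequence, `2 - αⱼ ≡ j² π` modulo
`π²`; hence `v_β(r) = e` and `v_β(t) = e · v_r(t)` for every nonzero integer `t`.
Reducing the equation modulo `r` gives `r ∣ x + y`, and lifting the exponent gives
`w + 1 = p · v_r(z)` for `w = v_r(x + y) ≥ 1`. From `α₁ - α₂ = π (3 - π)`,
`α₂ - 2 = -π (4 - π)` and `f₁ = (x + y)² - π x y` one gets `v_β(A) = 1 + 2ew > 2 = v_β(B)`.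
As `c₄ = 16 (A² + AB + B²)` and `Δ = 16 A²B²(A + B)²`, `v_β(j) = 2 (v_β(B) - v_β(A))`, which is
`2 - 4ew = 2r - 4e · p · v_r(z)`: negative and prime to `p`.
-/

open NumberField IntermediateField IsDedekindDomain Finset WithZero

/-- The Lucas sequence `a n = Vₙ(a 1, 1)`, e.g. `a n = ζ ^ n + ζ⁻¹ ^ n`. -/
structure IsLucasSeq {R : Type*} [CommRing R] (a : ℕ → R) : Prop where
  zero : a 0 = 2
  add_two : ∀ n, a (n + 2) = a 1 * a (n + 1) - a n

namespace IsLucasSeq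

variable {R : Type*} [CommRing R] {a : ℕ → R}

theorem two_sub_one_sq_dvd (ha : IsLucasSeq a) (n : ℕ) :
    (2 - a 1) ^ 2 ∣ 2 - a n - n ^ 2 * (2 - a 1) := by
  induction n using Nat.twoStepInduction with
  | zero => simp [ha.zero]
  | one => simp
  | more n ihn ihn1 =>
    obtain ⟨c, hc⟩ := ihn
    obtain ⟨d, hd⟩ := ihn1
    refine ⟨a 1 * d - c - (n + 1) ^ 2, ?_⟩
    rw [ha.add_two]
    push_cast at hd ⊢
    linear_combination a 1 * hd - hc

theorem of_injective {L : Type*} [Field L] {ι : R →+* L} (hι : Function.Injective ι) {ζ : L}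
    (hζ : ζ ≠ 0) (ha : ∀ j, ι (a j) = ζ ^ j + ζ⁻¹ ^ j) : IsLucasSeq a where
  zero := hι <| by rw [ha, map_ofNat]; norm_num
  add_two n := hι <| by
    simp only [map_sub, map_mul, ha]
    linear_combination (-(ζ ^ n + ζ⁻¹ ^ n)) * mul_inv_cancel₀ hζ

end IsLucasSeq

theorem IsPrimitiveRoot.prod_two_sub_pow_add_inv_pow {L : Type*} [Field L] {ζ : L} {e : ℕ}
    (hζ : IsPrimitiveRoot ζ (2 * e + 1)) :
    ∏ k ∈ range e, (2 - (ζ ^ (k + 1) + ζ⁻¹ ^ (k + 1))) = 2 * e + 1 := by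
  have hζ0 : ζ ≠ 0 := hζ.ne_zero (by omega)
  have hinv : ∀ k ∈ range e, ζ⁻¹ ^ (k + 1) = ζ ^ (e + (e - 1 - k) + 1) := fun k hk =>
    (inv_pow ζ (k + 1)).trans <| inv_eq_of_mul_eq_one_right <| by
      rw [← pow_add, ← hζ.pow_eq_one]
      congr 1
      simp at hk
      omega
  calc ∏ k ∈ range e, (2 - (ζ ^ (k + 1) + ζ⁻¹ ^ (k + 1)))
      = ∏ k ∈ range e, (1 - ζ ^ (k + 1)) * (1 - ζ⁻¹ ^ (k + 1)) := by
        refine prod_congr rfl fun k _ => ?_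
        have h : (ζ * ζ⁻¹) ^ (k + 1) = 1 := by rw [mul_inv_cancel₀ hζ0, one_pow]
        linear_combination -h
    _ = (∏ k ∈ range e, (1 - ζ ^ (k + 1))) * ∏ k ∈ range e, (1 - ζ ^ (e + k + 1)) := by
        rw [prod_mul_distrib, ← prod_range_reflect (fun k => 1 - ζ ^ (e + k + 1))]
        exact congrArg _ (prod_congr rfl fun k hk => by rw [hinv k hk])
    _ = ∏ k ∈ range (e + e), (1 - ζ ^ (k + 1)) :=
        (prod_range_add (fun k => 1 - ζ ^ (k + 1)) e e).symm
    _ = 2 * e + 1 := by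
        rw [← two_mul, hζ.prod_one_sub_pow_eq_order]
        push_cast
        ring

theorem IsPrimitiveRoot.natCast_eq_prod_two_sub {R L : Type*} [CommRing R] [Field L]
    {ι : R →+* L} (hι : Function.Injective ι) {ζ : L} {e : ℕ}
    (hζ : IsPrimitiveRoot ζ (2 * e + 1)) {a : ℕ → R}
    (ha : ∀ j, ι (a j) = ζ ^ j + ζ⁻¹ ^ j) :
    ((2 * e + 1 : ℕ) : R) = ∏ k ∈ range e, (2 - a (k + 1)) := hι <| by
  simp only [map_natCast, map_prod, map_sub, map_ofNat, ha, hζ.prod_two_sub_pow_add_inv_pow]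
  push_cast
  ring

namespace Ideal

variable {R : Type*} [CommRing R] {I : Ideal R} {r : ℕ}

theorem intCast_mem_iff_dvd (hI : I ≠ ⊤) (hr : r.Prime) (hrI : (r : R) ∈ I) {t : ℤ} :
    (t : R) ∈ I ↔ (r : ℤ) ∣ t := by
  refine ⟨fun ht => ?_, fun ⟨c, hc⟩ => ?_⟩
  · by_contra hrt
    obtain ⟨u, w, huw⟩ := (Nat.prime_iff_prime_int.mp hr).coprime_iff_not_dvd.2 hrt
    refine hI ((eq_top_iff_one I).2 ?_)
    have h1 : ((u * r + w * t : ℤ) : R) ∈ I := by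
      push_cast
      exact add_mem (I.mul_mem_left _ hrI) (I.mul_mem_left _ ht)
    rwa [huw, Int.cast_one] at h1
  · rw [hc, Int.cast_mul, Int.cast_natCast]
    exact I.mul_mem_right _ hrI

theorem natCast_mem_iff_dvd (hI : I ≠ ⊤) (hr : r.Prime) (hrI : (r : R) ∈ I) {n : ℕ} :
    (n : R) ∈ I ↔ r ∣ n := by
  exact_mod_cast intCast_mem_iff_dvd (t := n) hI hr hrI

end Ideal

namespace WeierstrassCurve

variable {R : Type*} [CommRing R] (A B : R)

/-- The curve `y² = x (x - A) (x + B)`. -/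
def freyCurve : WeierstrassCurve R :=
  ⟨0, B - A, 0, -(A * B), 0⟩

theorem freyCurve_c₄ : (freyCurve A B).c₄ = 16 * (A ^ 2 + A * B + B ^ 2) := by
  simp only [freyCurve, c₄, b₂, b₄]
  ring

theorem freyCurve_Δ : (freyCurve A B).Δ = 16 * (A * B) ^ 2 * (A + B) ^ 2 := by
  simp only [freyCurve, Δ, b₂, b₄, b₆, b₈]
  ring

theorem valuation_freyCurve_c₄_pow_three_div_Δ {F Γ₀ : Type*} [Field F]
    [LinearOrderedCommGroupWithZero Γ₀] (v : Valuation F Γ₀) {A B : F} (h16 : v 16 = 1)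
    (hAB : v A < v B) :
    v ((freyCurve A B).c₄ ^ 3 / (freyCurve A B).Δ) = (v B / v A) ^ 2 := by
  have hB : v B ≠ 0 := (lt_of_le_of_lt zero_le hAB).ne'
  have hAB' : v (A + B) = v B := Valuation.map_add_eq_of_lt_right _ hAB
  have hc : v (A ^ 2 + A * B + B ^ 2) = v B ^ 2 := by
    rw [show A ^ 2 + A * B + B ^ 2 = A * (A + B) + B ^ 2 by ring,
      Valuation.map_add_eq_of_lt_right _ ?_, map_pow]
    rw [map_mul, hAB', map_pow, sq]
    exact mul_lt_mul_of_pos_right hAB (zero_lt_iff.2 hB)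
  rw [freyCurve_c₄, freyCurve_Δ, map_div₀, map_pow, map_mul, h16, one_mul, hc, map_mul,
    map_mul, h16, one_mul, map_pow, map_pow, hAB', map_mul]
  field_simp

end WeierstrassCurve

namespace IsDedekindDomain.HeightOneSpectrum

variable {R : Type*} [CommRing R] [IsDedekindDomain R] {v : HeightOneSpectrum R} {r : ℕ}

theorem intValuation_intCast (hr : r.Prime) (hrv : (r : R) ∈ v.asIdeal) {e : ℤ}
    (hvr : v.intValuation (r : R) = exp (-e)) {t : ℤ} (ht : t ≠ 0) :
    v.intValuation (t : R) = exp (-(e * padicValInt r t)) := by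
  have := Fact.mk hr
  obtain ⟨u, hu⟩ := padicValInt_dvd (p := r) t
  have hru : ¬ (r : ℤ) ∣ u := by
    rintro ⟨c, rfl⟩
    have := (padicValInt_dvd_iff (p := r) (padicValInt r t + 1) t).1
      ⟨c, by linear_combination hu⟩
    exact this.elim ht (by omega)
  conv_lhs => rw [hu]
  rw [Int.cast_mul, map_mul, Int.cast_pow, map_pow, Int.cast_natCast, hvr,
    intValuation_eq_one_iff.2 ((Ideal.intCast_mem_iff_dvd v.isPrime.ne_top hr hrv).not.2 hru),
    mul_one, ← exp_nsmul]
  congr 1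
  simp only [nsmul_eq_mul]
  ring

theorem valuation_freyCurve_c₄_pow_three_div_Δ_eq (K : Type*) [Field K] [Algebra R K]
    [IsFractionRing R K] (h2 : (2 : R) ∉ v.asIdeal) {A B : R} {m n : ℤ}
    (hA : v.intValuation A = exp (-m)) (hB : v.intValuation B = exp (-n)) (hnm : n < m) :
    v.valuation K ((WeierstrassCurve.freyCurve (algebraMap R K A) (algebraMap R K B)).c₄ ^ 3 /
      (WeierstrassCurve.freyCurve (algebraMap R K A) (algebraMap R K B)).Δ) =
      exp (2 * (m - n)) := by
  have h16 : v.valuation K 16 = 1 := by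
    rw [← map_ofNat (algebraMap R K) 16, valuation_of_algebraMap,
      show (16 : R) = 2 ^ 4 by norm_num, map_pow, intValuation_eq_one_iff.2 h2, one_pow]
  rw [WeierstrassCurve.valuation_freyCurve_c₄_pow_three_div_Δ _ h16, valuation_of_algebraMap,
    valuation_of_algebraMap, hA, hB, ← exp_sub, ← exp_nsmul, nsmul_eq_mul]
  · exact congrArg exp (by push_cast; ring)
  · rw [valuation_of_algebraMap, valuation_of_algebraMap, hA, hB, exp_lt_exp]
    omega

variable {a : ℕ → R}

theorem intValuation_two_sub_one (hv : v.asIdeal = Ideal.span {2 - a 1}) :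
    v.intValuation (2 - a 1) = exp (-1) :=
  v.intValuation_singleton (fun h => v.ne_bot (by rw [hv, h, Ideal.span_singleton_eq_bot.2 rfl])) hv

variable (ha : IsLucasSeq a) (hv : v.asIdeal = Ideal.span {2 - a 1})
include ha hv

theorem intValuation_two_sub (hr : r.Prime) (hrv : (r : R) ∈ v.asIdeal) {j : ℕ}
    (hj : ¬ r ∣ j) :
    v.intValuation (2 - a j) = exp (-1) := by
  obtain ⟨c, hc⟩ := ha.two_sub_one_sq_dvd j
  have hmain : v.intValuation ((j : R) ^ 2 * (2 - a 1)) = exp (-1) := by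
    rw [map_mul, map_pow, intValuation_eq_one_iff.2
      ((Ideal.natCast_mem_iff_dvd v.isPrime.ne_top hr hrv).not.2 hj), intValuation_two_sub_one hv,
      one_pow, one_mul]
  have hrest : v.intValuation ((2 - a 1) ^ 2 * c) < exp (-1) := by
    rw [map_mul, map_pow, intValuation_two_sub_one hv]
    calc exp (-1) ^ 2 * v.intValuation c ≤ exp (-1) ^ 2 :=
          mul_le_of_le_one_right' (v.intValuation_le_one c)
      _ < exp (-1) := by rw [← exp_nsmul, exp_lt_exp]; norm_num
  rw [show 2 - a j = (2 - a 1) ^ 2 * c + (j : R) ^ 2 * (2 - a 1) by linear_combination hc,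
    Valuation.map_add_eq_of_lt_right _ (hmain ▸ hrest), hmain]

theorem intValuation_natCast_of_eq_prod (hr : r.Prime) {e : ℕ}
    (hprod : (r : R) = ∏ k ∈ range e, (2 - a (k + 1))) (he : 0 < e) (her : e < r) :
    v.intValuation (r : R) = exp (-(e : ℤ)) := by
  have hrv : (r : R) ∈ v.asIdeal := by
    rw [hprod, hv, Ideal.mem_span_singleton]
    exact dvd_prod_of_mem (fun k => 2 - a (k + 1)) (mem_range.2 he)
  rw [hprod, map_prod, prod_congr rfl fun k hk => intValuation_two_sub ha hv hr hrv
    (Nat.not_dvd_of_pos_of_lt k.succ_pos (by simp at hk; omega)), prod_const, card_range,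
    ← exp_nsmul]
  simp

theorem intValuation_sub_mul_sq (h3 : (3 : R) ∉ v.asIdeal) {s : R} {n : ℤ}
    (hs : v.intValuation s = exp (-n)) :
    v.intValuation ((a 1 - a 2) * s ^ 2) = exp (-(1 + 2 * n)) := by
  have h2 : a 2 = a 1 * a 1 - 2 := by simpa [ha.zero] using ha.add_two 0
  have hπ : 2 - a 1 ∈ v.asIdeal := hv ▸ Ideal.mem_span_singleton_self _
  rw [show a 1 - a 2 = (2 - a 1) * (3 - (2 - a 1)) by rw [h2]; ring, map_mul, map_mul,
    intValuation_two_sub_one hv,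
    intValuation_eq_one_iff.2 ((v.asIdeal.sub_mem_iff_left hπ).not.2 h3),
    map_pow, hs, mul_one, ← exp_nsmul, ← exp_add]
  congr 1
  simp only [nsmul_eq_mul]
  push_cast
  ring

theorem intValuation_sub_two_mul_sq_add_mul_add_sq (h4 : (4 : R) ∉ v.asIdeal) {x y : R}
    (hx : x ∉ v.asIdeal) (hy : y ∉ v.asIdeal) {n : ℤ} (hn : 0 < n)
    (hxy : v.intValuation (x + y) = exp (-n)) :
    v.intValuation ((a 2 - 2) * (x ^ 2 + a 1 * x * y + y ^ 2)) = exp (-2) := by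
  have h2 : a 2 = a 1 * a 1 - 2 := by simpa [ha.zero] using ha.add_two 0
  have hπ : 2 - a 1 ∈ v.asIdeal := hv ▸ Ideal.mem_span_singleton_self _
  have hπxy : v.intValuation (-((2 - a 1) * (x * y))) = exp (-1) := by
    rw [Valuation.map_neg, map_mul, map_mul, intValuation_two_sub_one hv,
      intValuation_eq_one_iff.2 hx, intValuation_eq_one_iff.2 hy, mul_one, mul_one]
  have hf : v.intValuation (x ^ 2 + a 1 * x * y + y ^ 2) = exp (-1) := by
    rw [show x ^ 2 + a 1 * x * y + y ^ 2 = (x + y) ^ 2 + -((2 - a 1) * (x * y)) by ring,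
      Valuation.map_add_eq_of_lt_right _ ?_, hπxy]
    rw [hπxy, map_pow, hxy, ← exp_nsmul, exp_lt_exp, nsmul_eq_mul]
    omega
  rw [show a 2 - 2 = -((2 - a 1) * (4 - (2 - a 1))) by rw [h2]; ring, map_mul,
    Valuation.map_neg, map_mul, intValuation_two_sub_one hv,
    intValuation_eq_one_iff.2 ((v.asIdeal.sub_mem_iff_left hπ).not.2 h4), hf, mul_one,
    ← exp_add]
  norm_num

end IsDedekindDomain.HeightOneSpectrum

theorem Int.dvd_add_of_dvd_pow_add_pow_s13 {r : ℕ} (hr : r.Prime) {x y : ℤ}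
    (h : (r : ℤ) ∣ x ^ r + y ^ r) : (r : ℤ) ∣ x + y := by
  have := Fact.mk hr
  rw [← ZMod.intCast_zmod_eq_zero_iff_dvd] at h ⊢
  push_cast at h ⊢
  rwa [ZMod.pow_card, ZMod.pow_card] at h

theorem Int.not_dvd_of_gcd_eq_one {r : ℕ} (hr : r.Prime) {x y z : ℤ}
    (hgcd : Int.gcd (Int.gcd x y) z = 1) (hrz : (r : ℤ) ∣ z) (hrxy : (r : ℤ) ∣ x + y) :
    ¬ (r : ℤ) ∣ x ∧ ¬ (r : ℤ) ∣ y := by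
  have key : ¬ ((r : ℤ) ∣ x ∧ (r : ℤ) ∣ y) := fun ⟨hx, hy⟩ => hr.not_dvd_one <|
    Int.natCast_dvd_natCast.1 (hgcd ▸ Int.dvd_coe_gcd (Int.dvd_coe_gcd hx hy) hrz)
  exact ⟨fun hx => key ⟨hx, (dvd_add_right hx).1 hrxy⟩,
    fun hy => key ⟨(dvd_add_left hy).1 hrxy, hy⟩⟩

theorem padicValInt.pow_add_pow {r : ℕ} (hr : r.Prime) (hodd : Odd r) {x y : ℤ}
    (hxy : (r : ℤ) ∣ x + y) (hx : ¬ (r : ℤ) ∣ x) (h0 : x + y ≠ 0) :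
    padicValInt r (x ^ r + y ^ r) = padicValInt r (x + y) + 1 := by
  have hval (t : ℤ) (ht : t ≠ 0) : (padicValInt r t : ℕ∞) = emultiplicity (r : ℤ) t := by
    rw [padicValInt, padicValNat_eq_emultiplicity_of_ne_one hr.ne_one (Int.natAbs_ne_zero.2 ht),
      Int.emultiplicity_natAbs]
  have h0' : x ^ r + y ^ r ≠ 0 := fun h => h0 <| by
    rw [hodd.pow_inj.1 (by rw [hodd.neg_pow]; linear_combination h : x ^ r = (-y) ^ r)]
    ring
  have key : emultiplicity (r : ℤ) (x ^ r + y ^ r) = emultiplicity (r : ℤ) (x + y) + 1 := by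
    simpa [hodd.neg_pow] using emultiplicity_pow_prime_sub_pow_prime
      (Nat.prime_iff_prime_int.mp hr) hodd (x := x) (y := -y) (by simpa using hxy) hx
  have : (padicValInt r (x ^ r + y ^ r) : ℕ∞) = padicValInt r (x + y) + 1 := by
    rw [hval _ h0', key, hval _ h0]
  exact_mod_cast this

theorem Int.padicValInt_add_of_pow_add_pow_eq {r p : ℕ} (hr : r.Prime) (hodd : Odd r)
    (hp : p ≠ 0) {x y z D : ℤ} (hgcd : Int.gcd (Int.gcd x y) z = 1) (hD : D ≠ 0)
    (hDr : Int.gcd D r = 1) (hz : z ≠ 0) (hk : 0 < padicValInt r z)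
    (heq : x ^ r + y ^ r = D * z ^ p) :
    ¬ (r : ℤ) ∣ x ∧ ¬ (r : ℤ) ∣ y ∧ x + y ≠ 0 ∧
      padicValInt r (x + y) + 1 = p * padicValInt r z := by
  have := Fact.mk hr
  have hrz : (r : ℤ) ∣ z := by simpa using (padicValInt_dvd_iff (p := r) 1 z).2 (.inr hk)
  have hrxy : (r : ℤ) ∣ x + y :=
    Int.dvd_add_of_dvd_pow_add_pow_s13 hr (heq ▸ (dvd_pow hrz hp).mul_left D)
  have hrD : ¬ (r : ℤ) ∣ D := fun h => hr.not_dvd_one <|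
    Int.natCast_dvd_natCast.1 (hDr ▸ Int.dvd_coe_gcd h (dvd_refl (r : ℤ)))
  have hxy0 : x + y ≠ 0 := fun h =>
    mul_ne_zero hD (pow_ne_zero p hz) (heq ▸ hodd.pow_add_pow_eq_zero h)
  obtain ⟨hrx, hry⟩ := Int.not_dvd_of_gcd_eq_one hr hgcd hrz hrxy
  refine ⟨hrx, hry, hxy0, ?_⟩
  rw [← padicValInt.pow_add_pow hr hodd hrxy hrx hxy0, heq, padicValInt.mul hD (pow_ne_zero _ hz),
    padicValInt.eq_zero_of_not_dvd hrD, zero_add]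
  simp [padicValInt, Int.natAbs_pow, padicValNat.pow]

theorem not_dvd_two_sub_four_mul {p r e w k : ℕ} (hp : p.Prime) (hr : r.Prime) (hp2 : p ≠ 2)
    (hpr : p ≠ r) (he : r = 2 * e + 1) (hw : w + 1 = p * k) :
    ¬ (p : ℤ) ∣ 2 - 4 * e * w := by
  intro h
  have h2r : (p : ℤ) ∣ 2 * r := by
    have hw' : (w + 1 : ℤ) = p * k := by exact_mod_cast hw
    rw [show (2 * r : ℤ) = 2 - 4 * e * w + p * (4 * e * k) by
      rw [he]; push_cast; linear_combination 4 * e * hw']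
    exact dvd_add h (dvd_mul_right _ _)
  rcases (Nat.prime_iff_prime_int.mp hp).dvd_mul.1 h2r with h | h
  · exact hp2 ((Nat.prime_dvd_prime_iff_eq hp Nat.prime_two).1 (by exact_mod_cast h))
  · exact hpr ((Nat.prime_dvd_prime_iff_eq hp hr).1 (by exact_mod_cast h))

open IsDedekindDomain.HeightOneSpectrum

theorem stmt_13_general (r : ℕ) (hr : r.Prime) (hr5 : 5 < r)
    (L : Type) [Field L] [NumberField L] (ζ : L) (hζ : IsPrimitiveRoot ζ r)
    (K : IntermediateField ℚ L) [NumberField K]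
    (α : ℕ → 𝓞 K) (hα : ∀ j, ((α j : K) : L) = ζ ^ j + ζ⁻¹ ^ j)
    (D : ℤ) (hD : D ≠ 0) (hDr : Int.gcd D r = 1)
    (p : ℕ) (hp : p.Prime) (hp2 : p ≠ 2) (hpr : p ≠ r)
    (x y z : ℤ) (hgcd : Int.gcd (Int.gcd x y) z = 1) (hxyz : x * y * z ≠ 0)
    (heq : x ^ r + y ^ r = D * z ^ p)
    (hk : 0 < padicValInt r z)
    (f : ℕ → 𝓞 K)
    (hf : ∀ j, f j = (x : 𝓞 K) ^ 2 + α j * (x : 𝓞 K) * (y : 𝓞 K) + (y : 𝓞 K) ^ 2)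
    (A B : 𝓞 K)
    (hA : A = (α 1 - α 2) * ((x : 𝓞 K) + (y : 𝓞 K)) ^ 2)
    (hB : B = (α 2 - 2) * f 1)
    (E : WeierstrassCurve K)
    (hE : E = ⟨0, (B : K) - (A : K), 0, -((A : K) * (B : K)), 0⟩)
    (β' : HeightOneSpectrum (𝓞 K))
    (hβ' : β'.asIdeal = Ideal.span {(2 : 𝓞 K) - α 1}) :
    ∃ m : ℤ, m < 0 ∧ ¬ (p : ℤ) ∣ m ∧
      β'.valuation K (E.c₄ ^ 3 / E.Δ) = Multiplicative.ofAdd (-m) := by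
  obtain ⟨e, he⟩ := hr.odd_of_ne_two (by omega)
  have hι : Function.Injective ((algebraMap K L).comp (algebraMap (𝓞 K) K)) :=
    (algebraMap K L).injective.comp RingOfIntegers.coe_injective
  have hlucas : IsLucasSeq α := .of_injective hι (hζ.ne_zero hr.ne_zero) hα
  have hvr : β'.intValuation (r : 𝓞 K) = exp (-(e : ℤ)) :=
    intValuation_natCast_of_eq_prod hlucas hβ' hr
      (by rw [he]; exact (he ▸ hζ).natCast_eq_prod_two_sub hι hα) (by omega) (by omega)
  have hrv : (r : 𝓞 K) ∈ β'.asIdeal :=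
    (intValuation_lt_one_iff_mem _ _).1 (by rw [hvr, ← exp_zero, exp_lt_exp]; omega)
  have hsmall (n : ℕ) (h0 : 0 < n) (hn : n < r) : (n : 𝓞 K) ∉ β'.asIdeal :=
    (Ideal.natCast_mem_iff_dvd β'.isPrime.ne_top hr hrv).not.2 (Nat.not_dvd_of_pos_of_lt h0 hn)
  have hmem (t : ℤ) : ¬ (r : ℤ) ∣ t → (t : 𝓞 K) ∉ β'.asIdeal :=
    (Ideal.intCast_mem_iff_dvd β'.isPrime.ne_top hr hrv).not.2
  obtain ⟨hrx, hry, hxy0, hw⟩ := Int.padicValInt_add_of_pow_add_pow_eq hr ⟨e, he⟩ hp.ne_zero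
    hgcd hD hDr (right_ne_zero_of_mul hxyz) hk heq
  set w := padicValInt r (x + y)
  have hew : 0 < e * w := Nat.mul_pos (by omega) (by nlinarith [hp.two_le])
  have hvxy : β'.intValuation ((x : 𝓞 K) + y) = exp (-(e * w : ℤ)) := by
    simpa using intValuation_intCast hr hrv hvr hxy0
  have hvA : β'.intValuation A = exp (-(1 + 2 * (e * w : ℤ))) :=
    hA ▸ intValuation_sub_mul_sq hlucas hβ' (mod_cast hsmall 3 zero_lt_three (by omega)) hvxy
  have hvB : β'.intValuation B = exp (-2) := hB ▸ hf 1 ▸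
    intValuation_sub_two_mul_sq_add_mul_add_sq hlucas hβ'
      (mod_cast hsmall 4 zero_lt_four (by omega)) (hmem x hrx) (hmem y hry) (mod_cast hew) hvxy
  refine ⟨2 - 4 * e * w, by linarith [show (1 : ℤ) ≤ e * w from mod_cast hew],
    not_dvd_two_sub_four_mul hp hr hp2 hpr he hw, ?_⟩
  rw [hE]
  exact (valuation_freyCurve_c₄_pow_three_div_Δ_eq K (mod_cast hsmall 2 two_pos (by omega))
    hvA hvB (by linarith)).trans (congrArg exp (by ring))

/-- for p an odd prime, v_β(j(E₂)) < 0 and p ∤ v_β(j(E₂)). -/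
theorem stmt_13 (r : ℕ) (hr : r.Prime) (hr5 : 5 < r)
    (L : Type) [Field L] [NumberField L] (ζ : L) (hζ : IsPrimitiveRoot ζ r)
    (K : IntermediateField ℚ L) (hK : K = ℚ⟮ζ + ζ⁻¹⟯) [NumberField K]
    (α : ℕ → 𝓞 K) (hα : ∀ j, ((α j : K) : L) = ζ ^ j + ζ⁻¹ ^ j)
    (D : ℤ) (hD : D ≠ 0) (hDr : Int.gcd D r = 1)
    (p : ℕ) (hp : p.Prime) (hp2 : p ≠ 2) (hpr : p ≠ r)
    (x y z : ℤ) (hgcd : Int.gcd (Int.gcd x y) z = 1) (hxyz : x * y * z ≠ 0)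
    (heq : x ^ r + y ^ r = D * z ^ p)
    (hk : 0 < padicValInt r z)
    (f : ℕ → 𝓞 K)
    (hf : ∀ j, f j = (x : 𝓞 K) ^ 2 + α j * (x : 𝓞 K) * (y : 𝓞 K) + (y : 𝓞 K) ^ 2)
    (A B : 𝓞 K)
    (hA : A = (α 1 - α 2) * ((x : 𝓞 K) + (y : 𝓞 K)) ^ 2)
    (hB : B = (α 2 - 2) * f 1)
    (E : WeierstrassCurve K)
    (hE : E = ⟨0, (B : K) - (A : K), 0, -((A : K) * (B : K)), 0⟩)
    (β' : HeightOneSpectrum (𝓞 K))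
    (hβ' : β'.asIdeal = Ideal.span {(2 : 𝓞 K) - α 1}) :
    ∃ m : ℤ, m < 0 ∧ ¬ (p : ℤ) ∣ m ∧
      β'.valuation K (E.c₄ ^ 3 / E.Δ) = Multiplicative.ofAdd (-m) :=
  stmt_13_general r hr hr5 L ζ hζ K α hα D hD hDr p hp hp2 hpr x y z hgcd hxyz heq hk f hf A B hA hB
    E hE β' hβ'
end
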